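/- Let λ > 0, let Θ̂ be a graphical lasso solution at λ for S, and let Ŵ = Θ̂⁻¹. Then for all indices i ≠ j with Θ̂_ij = 0, one has |S_ij − Ŵ_ij| ≤ λ. -/

import Mathlib

open Matrix

/-- The graphical lasso objective: `f(Θ) = -log det Θ + tr(AΘ) + λ ∑_{i,j} |Θ_ij|`. -/
noncomputable def glassoObj {n : Type*} [Fintype n] [DecidableEq n]
    (lam : ℝ) (A Θ : Matrix n n ℝ) : ℝ :=
  -Real.log Θ.det + (A * Θ).trace + lam * ∑ i, ∑ j, |Θ i j|

/-- `Θ` is a graphical lasso solution at `lam` for `A`: it is (symmetric) positive definite and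
minimizes the graphical lasso objective over all symmetric positive definite matrices.
(Over `ℝ`, `Matrix.PosDef` includes symmetry.) -/
def IsGlassoSol {n : Type*} [Fintype n] [DecidableEq n]
    (lam : ℝ) (A Θ : Matrix n n ℝ) : Prop :=
  Θ.PosDef ∧ ∀ Ψ : Matrix n n ℝ, Ψ.PosDef → glassoObj lam A Θ ≤ glassoObj lam A Ψ

/-- The thresholded sample covariance graph: an edge between distinct `i, j` iff `|S i j| > lam`. -/
def covGraph {n : Type*} (lam : ℝ) (S : Matrix n n ℝ) : SimpleGraph n :=
  SimpleGraph.fromRel (fun i j => lam < |S i j|)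

/-- The estimated concentration graph: an edge between distinct `i, j` iff `Θ i j ≠ 0`. -/
def concGraph {n : Type*} (Θ : Matrix n n ℝ) : SimpleGraph n :=
  SimpleGraph.fromRel (fun i j => Θ i j ≠ 0)

/-! Perturb `Θ` along the symmetric direction `E = eᵢeⱼᵀ + eⱼeᵢᵀ`. For small `|t|` the matrix
`Θ + tE` is still positive definite, and since `Θᵢⱼ = Θⱼᵢ = 0` the penalty grows by exactly
`2λ|t|`; so the smooth part `g t = -log det (Θ + tE) + tr (S (Θ + tE))` satisfies
`g 0 ≤ g t + 2λ|t|` near `0`. Jacobi's formula gives `g' 0 = tr (SE) - tr (Θ⁻¹E) = 2 (Sᵢⱼ - Wᵢⱼ)`,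
and a function dominated in this way at a point has derivative of absolute value at most `2λ`. -/

open Filter Topology

theorem abs_le_of_hasDerivAt_of_le_add_abs {h : ℝ → ℝ} {a d c : ℝ} (hd : HasDerivAt h d a)
    (hle : ∀ᶠ t in 𝓝 a, h a ≤ h t + c * |t - a|) : |d| ≤ c := by
  have hslope := hasDerivAt_iff_tendsto_slope.mp hd
  refine abs_le.mpr ⟨ge_of_tendsto (hslope.mono_left (nhdsGT_le_nhdsNE a)) ?_,
    le_of_tendsto (hslope.mono_left (nhdsLT_le_nhdsNE a)) ?_⟩
  · filter_upwards [nhdsWithin_le_nhds hle, self_mem_nhdsWithin] with t ht (hat : a < t)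
    rw [abs_of_pos (sub_pos.2 hat)] at ht
    rw [slope_def_field, le_div_iff₀ (sub_pos.2 hat)]
    linarith
  · filter_upwards [nhdsWithin_le_nhds hle, self_mem_nhdsWithin] with t ht (hta : t < a)
    rw [abs_of_neg (sub_neg.2 hta)] at ht
    rw [slope_def_field, div_le_iff_of_neg (sub_neg.2 hta)]
    linarith

section

variable {n : Type*} [Fintype n]

theorem Matrix.PosDef.eventually_add_smul {A B : Matrix n n ℝ} (hA : A.PosDef)
    (hB : B.IsHermitian) : ∀ᶠ t in 𝓝 (0 : ℝ), (A + t • B).PosDef := by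
  have hq : Continuous fun p : ℝ × (n → ℝ) => p.2 ⬝ᵥ (A + p.1 • B) *ᵥ p.2 := by
    fun_prop
  have hsphere : ∀ᶠ t in 𝓝 (0 : ℝ), ∀ x ∈ Metric.sphere (0 : n → ℝ) 1,
      0 < x ⬝ᵥ (A + t • B) *ᵥ x :=
    (isCompact_sphere 0 1).eventually_forall_of_forall_eventually fun x hx =>
      (hq.continuousAt (x := (0, x))).eventually (lt_mem_nhds (by
        simpa using hA.dotProduct_mulVec_pos (x := x) (by rintro rfl; simp at hx)))
  filter_upwards [hsphere] with t ht
  refine .of_dotProduct_mulVec_pos (hA.isHermitian.add (hB.smul (.all t))) fun x hx => ?_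
  -- the quadratic form is homogeneous of degree two, so positivity on the sphere suffices
  have := ht (‖x‖⁻¹ • x) (by simp [norm_smul, hx])
  rw [mulVec_smul, dotProduct_smul, smul_dotProduct] at this
  simpa [hx] using this

theorem hasDerivAt_trace_mul_add_smul (A M B : Matrix n n ℝ) :
    HasDerivAt (fun t : ℝ => (A * (M + t • B)).trace) (A * B).trace 0 := by
  simp only [Matrix.mul_add, trace_add, Matrix.mul_smul, trace_smul, smul_eq_mul]
  simpa using ((hasDerivAt_id (0 : ℝ)).mul_const (A * B).trace).const_add (A * M).trace

variable [DecidableEq n]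

theorem hasDerivAt_det_one_add_smul (M : Matrix n n ℝ) :
    HasDerivAt (fun t : ℝ => (1 + t • M).det) M.trace 0 := by
  have hP := (det (1 + (Polynomial.X : Polynomial ℝ) • M.map Polynomial.C)).hasDerivAt 0
  rw [derivative_det_one_add_X_smul] at hP
  refine hP.congr_of_eventuallyEq (.of_forall fun t => ?_)
  dsimp only
  rw [← Polynomial.coe_evalRingHom, RingHom.map_det]
  congr 1
  ext a b
  by_cases hab : a = b <;> simp [one_apply, hab] <;> ring

theorem hasDerivAt_log_det_add_smul {A : Matrix n n ℝ} (hA : A.det ≠ 0) (B : Matrix n n ℝ) :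
    HasDerivAt (fun t : ℝ => Real.log (A + t • B).det) (A⁻¹ * B).trace 0 := by
  have hfac : ∀ t : ℝ, A + t • B = A * (1 + t • (A⁻¹ * B)) := fun t => by
    rw [Matrix.mul_add, Matrix.mul_one, Matrix.mul_smul, ← Matrix.mul_assoc,
      Matrix.mul_nonsing_inv A hA.isUnit, Matrix.one_mul]
  have hdet := ((hasDerivAt_det_one_add_smul (A⁻¹ * B)).const_mul A.det).log (by simpa using hA)
  simp only [hfac, det_mul]
  refine hdet.congr_deriv ?_
  simp [hA]

theorem sum_abs_add_single_of_apply_eq_zero {m : Type*} [Fintype m] [DecidableEq m]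
    {A : Matrix m n ℝ} {i : m} {j : n} (h : A i j = 0) (c : ℝ) :
    ∑ a, ∑ b, |(A + single i j c) a b| = ∑ a, ∑ b, |A a b| + |c| := by
  have hentry : ∀ a b, |(A + single i j c) a b| = |A a b| + single i j |c| a b := by
    intro a b
    by_cases hab : i = a ∧ j = b
    · obtain ⟨rfl, rfl⟩ := hab
      simp [h]
    · simp [hab]
  simp only [hentry, Finset.sum_add_distrib]
  simp [single_apply, ite_and]

theorem sum_abs_add_smul_single_add_single {A : Matrix n n ℝ} {i j : n} (hij : i ≠ j)
    (hA : A i j = 0) (hA' : A j i = 0) (t : ℝ) :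
    ∑ a, ∑ b, |(A + t • (single i j 1 + single j i 1) : Matrix n n ℝ) a b| =
      ∑ a, ∑ b, |A a b| + 2 * |t| := by
  have hA'' : (A + single i j t) j i = 0 := by simp [hA', single_apply_of_ne, hij]
  rw [smul_add, smul_single, smul_single, smul_eq_mul, mul_one, ← add_assoc,
    sum_abs_add_single_of_apply_eq_zero hA'', sum_abs_add_single_of_apply_eq_zero hA]
  ring

theorem trace_mul_single_add_single (M : Matrix n n ℝ) (i j : n) :
    (M * (single i j 1 + single j i 1)).trace = M j i + M i j := by
  simp [Matrix.mul_add, trace_mul_single]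

end

theorem glasso_kkt_zero_entries_general
    (p : ℕ) (S : Matrix (Fin p) (Fin p) ℝ) (hS : S.PosSemidef)
    (lam : ℝ)
    (Θ : Matrix (Fin p) (Fin p) ℝ) (hΘ : IsGlassoSol lam S Θ)
    (W : Matrix (Fin p) (Fin p) ℝ) (hW : W = Θ⁻¹) :
    ∀ i j : Fin p, i ≠ j → Θ i j = 0 → |S i j - W i j| ≤ lam := by
  intro i j hij hΘij
  obtain ⟨hPD, hmin⟩ := hΘ
  set E : Matrix (Fin p) (Fin p) ℝ := single i j 1 + single j i 1 with hE
  have hEsymm : E.IsHermitian := by simp [hE, IsHermitian, add_comm]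
  have hΘji : Θ j i = 0 := by simpa [hΘij] using hPD.isHermitian.apply i j
  let g : ℝ → ℝ := fun t => -Real.log (Θ + t • E).det + (S * (Θ + t • E)).trace
  have hg : HasDerivAt g (2 * (S i j - W i j)) 0 := by
    refine ((hasDerivAt_log_det_add_smul hPD.det_pos.ne' E).neg.add
      (hasDerivAt_trace_mul_add_smul S Θ E)).congr_deriv ?_
    have hSji : S j i = S i j := by simpa using hS.isHermitian.apply i j
    have hWji : W j i = W i j := by simpa using (hW ▸ hPD.isHermitian.inv).apply i j
    rw [hE, trace_mul_single_add_single, trace_mul_single_add_single, ← hW, hSji, hWji]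
    ring
  have hle : ∀ᶠ t in 𝓝 0, g 0 ≤ g t + 2 * lam * |t - 0| := by
    filter_upwards [hPD.eventually_add_smul hEsymm] with t ht
    have hobj := hmin _ ht
    simp only [glassoObj, hE, sum_abs_add_smul_single_add_single hij hΘij hΘji] at hobj
    simp only [g, zero_smul, add_zero, sub_zero]
    linarith
  have := abs_le_of_hasDerivAt_of_le_add_abs hg hle
  rw [abs_mul, abs_two] at this
  linarith

/-- KKT, inactive entries: if `Θ i j = 0` for `i ≠ j`, then
`|S i j - (Θ⁻¹) i j| ≤ lam`. -/
theorem glasso_kkt_zero_entries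
    (p : ℕ) (hp : 1 ≤ p) (S : Matrix (Fin p) (Fin p) ℝ) (hS : S.PosSemidef)
    (lam : ℝ) (hlam : 0 < lam)
    (Θ : Matrix (Fin p) (Fin p) ℝ) (hΘ : IsGlassoSol lam S Θ)
    (W : Matrix (Fin p) (Fin p) ℝ) (hW : W = Θ⁻¹) :
    ∀ i j : Fin p, i ≠ j → Θ i j = 0 → |S i j - W i j| ≤ lam :=
  glasso_kkt_zero_entries_general p S hS lam Θ hΘ W hW
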